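/- For every n ≥ 4 there exists a graph G of order n with μ₂(G) + μ₂(Ḡ) > (√2/2)·n − 3, where μ₂ denotes the second largest adjacency eigenvalue. -/

import Mathlib

open Matrix SimpleGraph

/-- The eigenvalues of the adjacency matrix of `G`, in descending order:
`graphEig G i` is the `(i+1)`-th largest eigenvalue. -/
noncomputable def graphEig {n : ℕ} (G : SimpleGraph (Fin n)) (i : Fin n) : ℝ :=
  letI := Classical.decRel G.Adj
  letI hH : (G.adjMatrix ℝ).IsHermitian := by rw [Matrix.IsHermitian, conjTranspose_eq_transpose_of_trivial]; exact G.isSymm_adjMatrix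
  hH.eigenvalues (Tuple.sort hH.eigenvalues i.rev)

/-! ### Auxiliary spectral lemmas -/

lemma two_eigenvalues_ge {n : ℕ} {A : Matrix (Fin n) (Fin n) ℝ} (hA : A.IsHermitian)
    {l : ℝ} {v w : Fin n → ℝ} (hv0 : v ≠ 0) (hw0 : w ≠ 0) (hvw : v ⬝ᵥ w = 0)
    (hw : A *ᵥ w = l • w) (hv : l * (v ⬝ᵥ v) ≤ v ⬝ᵥ (A *ᵥ v)) :
    ∃ i j : Fin n, i ≠ j ∧ l ≤ hA.eigenvalues i ∧ l ≤ hA.eigenvalues j := by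
  by_contra hcon
  push_neg at hcon
  have hsub : ∀ i j : Fin n, l ≤ hA.eigenvalues i → l ≤ hA.eigenvalues j → i = j := by
    intro i j hi hj
    by_contra hne
    exact absurd hj (not_le.mpr (hcon i j hne hi))
  set γ := hA.eigenvalues with hγ
  set u : Fin n → (Fin n → ℝ) := fun i => ⇑(hA.eigenvectorBasis i) with hu
  set U : Matrix (Fin n) (Fin n) ℝ := (hA.eigenvectorUnitary : Matrix (Fin n) (Fin n) ℝ) with hU
  have hAsymm : Aᵀ = A := by
    have := hA
    rwa [Matrix.IsHermitian, conjTranspose_eq_transpose_of_trivial] at this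
  have hU2 : U * star U = 1 := (Matrix.mem_unitaryGroup_iff).mp hA.eigenvectorUnitary.2
  have hspec : A = U * Matrix.diagonal γ * star U := by
    have := hA.spectral_theorem
    simpa [RCLike.ofReal_real_eq_id] using this
  have hcoord : ∀ x : Fin n → ℝ, (star U *ᵥ x) = fun i => u i ⬝ᵥ x := by
    intro x
    funext i
    simp [Matrix.mulVec, dotProduct, Matrix.star_apply, hU, hu]
  have aux : ∀ α β : ℝ, (α ≠ 0 ∨ β ≠ 0) →
      (∀ i, l ≤ γ i → α * (u i ⬝ᵥ v) - β * (u i ⬝ᵥ w) = 0) → False := by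
    intro α β hαβ hc0
    set z : Fin n → ℝ := α • v - β • w with hz
    have hvv : 0 < v ⬝ᵥ v :=
      lt_of_le_of_ne (Finset.sum_nonneg fun i _ => mul_self_nonneg _)
        (fun h => hv0 (dotProduct_self_eq_zero.mp h.symm))
    have hww : 0 < w ⬝ᵥ w :=
      lt_of_le_of_ne (Finset.sum_nonneg fun i _ => mul_self_nonneg _)
        (fun h => hw0 (dotProduct_self_eq_zero.mp h.symm))
    have hz0 : z ≠ 0 := by
      intro h0
      have h1 : v ⬝ᵥ z = α * (v ⬝ᵥ v) := by
        simp [hz, dotProduct_sub, dotProduct_smul, smul_eq_mul, hvw]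
      have h2 : w ⬝ᵥ z = - (β * (w ⬝ᵥ w)) := by
        simp [hz, dotProduct_sub, dotProduct_smul, smul_eq_mul, dotProduct_comm w v, hvw]
      rw [h0] at h1 h2
      simp only [dotProduct_zero] at h1 h2
      rcases hαβ with hα | hβ
      · exact hα (by nlinarith)
      · exact hβ (by nlinarith)
    set c : Fin n → ℝ := star U *ᵥ z with hc
    have hzc : U *ᵥ c = z := by
      rw [hc, Matrix.mulVec_mulVec, hU2, Matrix.one_mulVec]
    have hcval : ∀ i, c i = u i ⬝ᵥ z := by
      intro i; rw [hc, hcoord]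
    have hstar : star U = Uᵀ := by
      rw [Matrix.star_eq_conjTranspose, conjTranspose_eq_transpose_of_trivial]
    have hdotU : ∀ y : Fin n → ℝ, z ⬝ᵥ (U *ᵥ y) = c ⬝ᵥ y := by
      intro y
      rw [Matrix.dotProduct_mulVec, hc, hstar, Matrix.mulVec_transpose]
    have hdot1 : z ⬝ᵥ z = ∑ i, (c i)^2 := by
      have : z ⬝ᵥ z = z ⬝ᵥ (U *ᵥ c) := by rw [hzc]
      rw [this, hdotU]
      simp [dotProduct, sq]
    have hdot2 : z ⬝ᵥ (A *ᵥ z) = ∑ i, γ i * (c i)^2 := by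
      conv_lhs => rw [hspec]
      rw [← Matrix.mulVec_mulVec, ← Matrix.mulVec_mulVec, ← hc, hdotU]
      simp only [dotProduct]
      refine Finset.sum_congr rfl fun i _ => ?_
      rw [Matrix.mulVec_diagonal]
      ring
    have hγc : ∀ i, l ≤ γ i → c i = 0 := by
      intro i hi
      rw [hcval, hz]
      simp only [dotProduct_sub, dotProduct_smul, smul_eq_mul]
      linarith [hc0 i hi]
    have hcne : ∃ i, c i ≠ 0 := by
      by_contra hall
      push_neg at hall
      apply hz0
      rw [← hzc]
      have : c = 0 := funext hall
      rw [this, Matrix.mulVec_zero]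
    have hAv : v ⬝ᵥ (A *ᵥ w) = 0 := by
      rw [hw]; simp [dotProduct_smul, smul_eq_mul, hvw]
    have hAv2 : w ⬝ᵥ (A *ᵥ v) = 0 := by
      rw [Matrix.dotProduct_mulVec, ← Matrix.mulVec_transpose, hAsymm, hw]
      simp [smul_dotProduct, smul_eq_mul, dotProduct_comm w v, hvw]
    have hAw : w ⬝ᵥ (A *ᵥ w) = l * (w ⬝ᵥ w) := by
      rw [hw]; simp [dotProduct_smul, smul_eq_mul]
    have hray : l * (z ⬝ᵥ z) ≤ z ⬝ᵥ (A *ᵥ z) := by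
      have e1 : z ⬝ᵥ (A *ᵥ z) = α^2 * (v ⬝ᵥ (A *ᵥ v)) + β^2 * (l * (w ⬝ᵥ w)) := by
        rw [hz]
        rw [Matrix.mulVec_sub, Matrix.mulVec_smul, Matrix.mulVec_smul]
        simp only [dotProduct_sub, sub_dotProduct, dotProduct_smul, smul_dotProduct,
          smul_eq_mul, hAv, hAv2, hAw]
        ring
      have e2 : z ⬝ᵥ z = α^2 * (v ⬝ᵥ v) + β^2 * (w ⬝ᵥ w) := by
        rw [hz]
        simp only [dotProduct_sub, sub_dotProduct, dotProduct_smul, smul_dotProduct,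
          smul_eq_mul, hvw, dotProduct_comm w v]
        ring
      rw [e1, e2]
      nlinarith [sq_nonneg α, sq_nonneg β]
    have hlt : z ⬝ᵥ (A *ᵥ z) < l * (z ⬝ᵥ z) := by
      rw [hdot1, hdot2, Finset.mul_sum]
      apply Finset.sum_lt_sum
      · intro i _
        by_cases hci : c i = 0
        · simp [hci]
        · have hγi : γ i < l := by
            by_contra hge
            exact hci (hγc i (le_of_not_gt hge))
          exact mul_le_mul_of_nonneg_right hγi.le (sq_nonneg _)
      · obtain ⟨i, hi⟩ := hcne
        refine ⟨i, Finset.mem_univ i, ?_⟩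
        have hγi : γ i < l := by
          by_contra hge
          exact hi (hγc i (le_of_not_gt hge))
        have : 0 < (c i)^2 := by positivity
        nlinarith
    linarith
  by_cases hex : ∃ i, l ≤ γ i
  · obtain ⟨i₀, hi₀⟩ := hex
    by_cases hab : (u i₀ ⬝ᵥ w) = 0 ∧ (u i₀ ⬝ᵥ v) = 0
    · refine aux 1 0 (Or.inl one_ne_zero) fun i hi => ?_
      have : i = i₀ := hsub i i₀ hi hi₀
      subst this
      simp [hab.2]
    · refine aux (u i₀ ⬝ᵥ w) (u i₀ ⬝ᵥ v) ?_ fun i hi => ?_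
      · by_contra hc
        push_neg at hc
        exact hab ⟨hc.1, hc.2⟩
      · have : i = i₀ := hsub i i₀ hi hi₀
        subst this
        ring
  · push_neg at hex
    refine aux 1 0 (Or.inl one_ne_zero) fun i hi => absurd hi (not_le.mpr (hex i))

lemma sort_second {n : ℕ} (hn : 2 ≤ n) (f : Fin n → ℝ) (l : ℝ)
    (i j : Fin n) (hij : i ≠ j) (hi : l ≤ f i) (hj : l ≤ f j) :
    l ≤ f (Tuple.sort f (⟨1, by omega⟩ : Fin n).rev) := by
  have hrev : ((⟨1, by omega⟩ : Fin n).rev : ℕ) = n - 2 := by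
    simp [Fin.val_rev]
  set σ := Tuple.sort f with hσ
  have mono : Monotone (f ∘ σ) := Tuple.monotone_sort f
  by_contra hlt
  push_neg at hlt
  have key : ∀ k : Fin n, l ≤ f (σ k) → (k : ℕ) = n - 1 := by
    intro k hk
    by_contra hke
    have hkle : k ≤ (⟨1, by omega⟩ : Fin n).rev := by
      rw [Fin.le_def, hrev]
      omega
    have := mono hkle
    simp only [Function.comp_apply] at this
    linarith
  have h1 : ((σ⁻¹ i : Fin n) : ℕ) = n - 1 := key _ (by simpa using hi)
  have h2 : ((σ⁻¹ j : Fin n) : ℕ) = n - 1 := key _ (by simpa using hj)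
  apply hij
  have : (σ⁻¹ i : Fin n) = σ⁻¹ j := Fin.ext (h1.trans h2.symm)
  simpa using congrArg σ this

lemma graphEig_ge {n : ℕ} (hn : 2 ≤ n) (G : SimpleGraph (Fin n)) (l : ℝ) (v w : Fin n → ℝ)
    (hv0 : v ≠ 0) (hw0 : w ≠ 0) (hvw : v ⬝ᵥ w = 0)
    (hw : (letI := Classical.decRel G.Adj; G.adjMatrix ℝ) *ᵥ w = l • w)
    (hv : l * (v ⬝ᵥ v) ≤ v ⬝ᵥ ((letI := Classical.decRel G.Adj; G.adjMatrix ℝ) *ᵥ v)) :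
    l ≤ graphEig G ⟨1, by omega⟩ := by
  unfold graphEig
  obtain ⟨i, j, hij, hi, hj⟩ := two_eigenvalues_ge
    (A := (letI := Classical.decRel G.Adj; G.adjMatrix ℝ))
    (by letI := Classical.decRel G.Adj
        rw [Matrix.IsHermitian, conjTranspose_eq_transpose_of_trivial]
        exact G.isSymm_adjMatrix) hv0 hw0 hvw hw hv
  exact sort_second hn _ l i j hij hi hj

/-! ### The witnessing graph -/

def relB : ℕ → ℕ → Bool := fun i j =>
  (i == 0 && j == 0) || (i == 3 && j == 3) || (i == 0 && j == 1) || (i == 1 && j == 0)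
  || (i == 1 && j == 2) || (i == 2 && j == 1) || (i == 2 && j == 3) || (i == 3 && j == 2)

lemma relB_symm {i j : ℕ} (h : relB i j = true) : relB j i = true := by
  simp only [relB, Bool.or_eq_true, Bool.and_eq_true, beq_iff_eq] at h ⊢
  tauto

def clsN (a b : ℕ) (i : ℕ) : ℕ :=
  if i < a then 0 else if i < a + b then 1 else if i < a + 2*b then 2
  else if i < 2*a + 2*b then 3 else 4

lemma clsN_cases (a b i : ℕ) :
    clsN a b i = 0 ∨ clsN a b i = 1 ∨ clsN a b i = 2 ∨ clsN a b i = 3 ∨ clsN a b i = 4 := by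
  unfold clsN
  repeat' split
  all_goals simp

def myG (a b n : ℕ) : SimpleGraph (Fin n) where
  Adj u v := u ≠ v ∧ relB (clsN a b u) (clsN a b v) = true
  symm := by
    constructor
    intro u v h
    exact ⟨h.1.symm, relB_symm h.2⟩
  loopless := ⟨fun u h => h.1 rfl⟩

lemma sum_cls {n a b e : ℕ} (hn : n = 2*a + 2*b + e) (F : ℕ → ℝ) :
    ∑ v : Fin n, F (clsN a b (v : ℕ))
      = a * F 0 + b * F 1 + b * F 2 + a * F 3 + e * F 4 := by
  have h0 : ∑ v : Fin n, F (clsN a b (v : ℕ)) = ∑ i ∈ Finset.range n, F (clsN a b i) :=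
    Fin.sum_univ_eq_sum_range (fun i => F (clsN a b i)) n
  rw [h0, Finset.range_eq_Ico, hn]
  have key : ∀ (l r : ℕ) (k : ℕ), l ≤ r → (∀ i, l ≤ i → i < r → clsN a b i = k) →
      ∑ i ∈ Finset.Ico l r, F (clsN a b i) = ((r:ℝ) - l) * F k := by
    intro l r k hlr hk
    rw [Finset.sum_congr rfl fun i hi => by
      rw [hk i (Finset.mem_Ico.mp hi).1 (Finset.mem_Ico.mp hi).2]]
    rw [Finset.sum_const, Nat.card_Ico, nsmul_eq_mul, Nat.cast_sub hlr]
  have s2 : a ≤ a + b := by omega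
  have s3 : a + b ≤ a + 2*b := by omega
  have s4 : a + 2*b ≤ 2*a + 2*b := by omega
  have s5 : 2*a + 2*b ≤ 2*a + 2*b + e := by omega
  rw [← Finset.sum_Ico_consecutive _ (by omega : (0:ℕ) ≤ 2*a+2*b) s5,
      ← Finset.sum_Ico_consecutive _ (by omega : (0:ℕ) ≤ a+2*b) s4,
      ← Finset.sum_Ico_consecutive _ (by omega : (0:ℕ) ≤ a+b) s3,
      ← Finset.sum_Ico_consecutive _ (Nat.zero_le a) s2]
  rw [key 0 a 0 (by omega) (fun i h1 h2 => by unfold clsN; rw [if_pos h2]),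
      key a (a+b) 1 (by omega) (fun i h1 h2 => by unfold clsN; rw [if_neg (by omega), if_pos h2]),
      key (a+b) (a+2*b) 2 (by omega) (fun i h1 h2 => by
        unfold clsN; rw [if_neg (by omega), if_neg (by omega), if_pos h2]),
      key (a+2*b) (2*a+2*b) 3 (by omega) (fun i h1 h2 => by
        unfold clsN; rw [if_neg (by omega), if_neg (by omega), if_neg (by omega), if_pos h2]),
      key (2*a+2*b) (2*a+2*b+e) 4 (by omega) (fun i h1 h2 => by
        unfold clsN
        rw [if_neg (by omega), if_neg (by omega), if_neg (by omega), if_neg (by omega)])]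
  push_cast
  ring

lemma sum_adj {n a b e : ℕ} (hn : n = 2*a + 2*b + e) (R : ℕ → ℕ → Bool) (ω : ℕ → ℝ)
    (u : Fin n) :
    ∑ v : Fin n, (if u ≠ v ∧ R (clsN a b (u:ℕ)) (clsN a b (v:ℕ)) = true
        then ω (clsN a b (v:ℕ)) else 0)
      = (a * (if R (clsN a b (u:ℕ)) 0 then ω 0 else 0)
        + b * (if R (clsN a b (u:ℕ)) 1 then ω 1 else 0)
        + b * (if R (clsN a b (u:ℕ)) 2 then ω 2 else 0)
        + a * (if R (clsN a b (u:ℕ)) 3 then ω 3 else 0)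
        + e * (if R (clsN a b (u:ℕ)) 4 then ω 4 else 0))
        - (if R (clsN a b (u:ℕ)) (clsN a b (u:ℕ)) then ω (clsN a b (u:ℕ)) else 0) := by
  set F : ℕ → ℝ := fun k => if R (clsN a b (u:ℕ)) k then ω k else 0 with hF
  have step : ∀ v : Fin n,
      (if u ≠ v ∧ R (clsN a b (u:ℕ)) (clsN a b (v:ℕ)) = true then ω (clsN a b (v:ℕ)) else 0)
        = F (clsN a b (v:ℕ)) - (if v = u then F (clsN a b (u:ℕ)) else 0) := by
    intro v
    by_cases hv : v = u
    · subst hv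
      simp [hF]
    · rw [if_neg hv, sub_zero, hF]
      by_cases hr : R (clsN a b (u:ℕ)) (clsN a b (v:ℕ)) = true
      · rw [if_pos ⟨fun h => hv h.symm, hr⟩]
        simp [hr]
      · rw [if_neg (fun h => hr h.2)]
        simp [hr]
  rw [Finset.sum_congr rfl fun v _ => step v, Finset.sum_sub_distrib,
    Finset.sum_ite_eq' Finset.univ u (fun _ => F (clsN a b (u:ℕ)))]
  rw [sum_cls hn F, if_pos (Finset.mem_univ u)]

def rowVal (R : ℕ → ℕ → Bool) (ω : ℕ → ℝ) (a b e : ℕ) (k : ℕ) : ℝ :=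
  (a * (if R k 0 then ω 0 else 0) + b * (if R k 1 then ω 1 else 0)
   + b * (if R k 2 then ω 2 else 0) + a * (if R k 3 then ω 3 else 0)
   + e * (if R k 4 then ω 4 else 0)) - (if R k k then ω k else 0)

lemma mulVec_apply_myG {n a b e : ℕ} (hn : n = 2*a + 2*b + e) (ω : ℕ → ℝ) (u : Fin n) :
    ((letI := Classical.decRel (myG a b n).Adj; (myG a b n).adjMatrix ℝ)
      *ᵥ (fun v : Fin n => ω (clsN a b (v:ℕ)))) u = rowVal relB ω a b e (clsN a b (u:ℕ)) := by
  letI := Classical.decRel (myG a b n).Adj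
  show ∑ v : Fin n, (myG a b n).adjMatrix ℝ u v * ω (clsN a b (v:ℕ)) = _
  have h1 : ∀ v : Fin n, (myG a b n).adjMatrix ℝ u v * ω (clsN a b (v:ℕ))
      = (if u ≠ v ∧ relB (clsN a b (u:ℕ)) (clsN a b (v:ℕ)) = true
          then ω (clsN a b (v:ℕ)) else 0) := by
    intro v
    rw [SimpleGraph.adjMatrix_apply, ite_mul, one_mul, zero_mul]
    exact if_congr Iff.rfl rfl rfl
  rw [Finset.sum_congr rfl fun v _ => h1 v, sum_adj hn relB ω u]
  rfl

lemma mulVec_apply_myGc {n a b e : ℕ} (hn : n = 2*a + 2*b + e) (ω : ℕ → ℝ) (u : Fin n) :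
    ((letI := Classical.decRel (myG a b n)ᶜ.Adj; (myG a b n)ᶜ.adjMatrix ℝ)
      *ᵥ (fun v : Fin n => ω (clsN a b (v:ℕ)))) u
      = rowVal (fun i j => !relB i j) ω a b e (clsN a b (u:ℕ)) := by
  letI := Classical.decRel (myG a b n)ᶜ.Adj
  show ∑ v : Fin n, (myG a b n)ᶜ.adjMatrix ℝ u v * ω (clsN a b (v:ℕ)) = _
  have hiff : ∀ v : Fin n, (myG a b n)ᶜ.Adj u v ↔
      (u ≠ v ∧ (fun i j => !relB i j) (clsN a b (u:ℕ)) (clsN a b (v:ℕ)) = true) := by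
    intro v
    rw [SimpleGraph.compl_adj]
    constructor
    · rintro ⟨hne, hnadj⟩
      refine ⟨hne, ?_⟩
      simp only [Bool.not_eq_true']
      by_contra hr
      rw [Bool.not_eq_false] at hr
      exact hnadj ⟨hne, hr⟩
    · rintro ⟨hne, hr⟩
      simp only [Bool.not_eq_true'] at hr
      exact ⟨hne, fun hadj => by simp [hadj.2] at hr⟩
  have h1 : ∀ v : Fin n, (myG a b n)ᶜ.adjMatrix ℝ u v * ω (clsN a b (v:ℕ))
      = (if u ≠ v ∧ (fun i j => !relB i j) (clsN a b (u:ℕ)) (clsN a b (v:ℕ)) = true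
          then ω (clsN a b (v:ℕ)) else 0) := by
    intro v
    rw [SimpleGraph.adjMatrix_apply, ite_mul, one_mul, zero_mul]
    exact if_congr (hiff v) rfl rfl
  rw [Finset.sum_congr rfl fun v _ => h1 v, sum_adj hn (fun i j => !relB i j) ω u]
  rfl
def nuF : ℕ → ℝ := fun k => if k ≤ 3 then 1 else 0

def omG (A B lg : ℝ) : ℕ → ℝ := fun k =>
  if k = 0 then B else if k = 1 then lg - A + 1 else if k = 2 then -(lg - A + 1)
  else if k = 3 then -B else 0

def omC (A B lc : ℝ) : ℕ → ℝ := fun k =>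
  if k = 0 then -B else if k = 1 then lc + A else if k = 2 then -(lc + A)
  else if k = 3 then B else 0

lemma le_of_sq_le_sq' {t X : ℝ} (ht : 0 ≤ t) (hX : 0 ≤ X) (h : t^2 ≤ X^2) : t ≤ X := by
  nlinarith

lemma lt_of_sq_lt' {t Y : ℝ} (ht : 0 ≤ t) (h : Y^2 < t^2) : Y < t := by
  nlinarith

lemma final_arith (a b e t s : ℝ) (hB1 : 1 ≤ b) (hE0 : 0 ≤ e) (hE1 : e ≤ 1)
    (hcase : a = b ∨ a = b + 1) (ht2 : t^2 = (a - b - 1)^2 + 8*a*b - 4*b) (ht0 : 0 ≤ t)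
    (hs2 : s^2 = 2) (hs0 : 0 ≤ s) :
    s/2*(2*a + 2*b + e) - 3 < (a - b - 1 + t)/2 + (b - a - 1 + t)/2 := by
  have hs14 : 1.414 ≤ s := by nlinarith
  rcases hcase with hc | hc <;> rw [hc] at ht2 ⊢
  · have ht2' : t^2 = 8*b^2 - 4*b + 1 := by rw [ht2]; ring
    have htge : 2 ≤ t := by nlinarith [sq_nonneg (b - 1)]
    have hsq : (s*(4*b+1) - 4)^2 < (2*t)^2 := by
      nlinarith [sq_nonneg (4*b+1),
        mul_nonneg (by linarith : (0:ℝ) ≤ s - 1.414) (by linarith : (0:ℝ) ≤ b - 1)]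
    have hY : s*(4*b+1) - 4 < 2*t := lt_of_sq_lt' (by linarith) hsq
    have hmul : s*(2*b + 2*b + e) ≤ s*(4*b+1) :=
      mul_le_mul_of_nonneg_left (by linarith) hs0
    linarith
  · have ht2' : t^2 = 8*b^2 + 4*b := by rw [ht2]; ring
    have htge : 2 ≤ t := by nlinarith [sq_nonneg (b - 1)]
    have hsq : (s*(4*b+3) - 4)^2 < (2*t)^2 := by
      nlinarith [sq_nonneg (4*b+3),
        mul_nonneg (by linarith : (0:ℝ) ≤ s - 1.414) (by linarith : (0:ℝ) ≤ b - 1)]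
    have hY : s*(4*b+3) - 4 < 2*t := lt_of_sq_lt' (by linarith) hsq
    have hmul : s*(2*(b+1) + 2*b + e) ≤ s*(4*b+3) :=
      mul_le_mul_of_nonneg_left (by linarith) hs0
    linarith

set_option maxHeartbeats 1000000 in
lemma main_bound {n a b e : ℕ} (hb : 1 ≤ b) (hba : b ≤ a) (hab : a ≤ b + 1) (he : e ≤ 1)
    (hn : n = 2*a + 2*b + e) :
    Real.sqrt 2 / 2 * n - 3 <
      graphEig (myG a b n) ⟨1, by omega⟩ + graphEig (myG a b n)ᶜ ⟨1, by omega⟩ := by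
  have hn2 : 2 ≤ n := by omega
  have hA1 : (1:ℝ) ≤ (a:ℝ) := by exact_mod_cast le_trans hb hba
  have hB1 : (1:ℝ) ≤ (b:ℝ) := by exact_mod_cast hb
  have hBA : (b:ℝ) ≤ (a:ℝ) := by exact_mod_cast hba
  have hAB1 : (a:ℝ) ≤ (b:ℝ) + 1 := by exact_mod_cast hab
  have hE0 : (0:ℝ) ≤ (e:ℝ) := by positivity
  have hE1 : (e:ℝ) ≤ 1 := by exact_mod_cast he
  have hDg0 : (0:ℝ) ≤ ((a:ℝ) - b - 1)^2 + 8*a*b - 4*b := by nlinarith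
  have hDc0 : (0:ℝ) ≤ ((a:ℝ) - b + 1)^2 + 8*a*b - 4*a := by nlinarith
  set tg : ℝ := Real.sqrt (((a:ℝ) - b - 1)^2 + 8*a*b - 4*b) with htgdef
  set tc : ℝ := Real.sqrt (((a:ℝ) - b + 1)^2 + 8*a*b - 4*a) with htcdef
  have htg2 : tg^2 = ((a:ℝ) - b - 1)^2 + 8*a*b - 4*b := Real.sq_sqrt hDg0
  have htc2 : tc^2 = ((a:ℝ) - b + 1)^2 + 8*a*b - 4*a := Real.sq_sqrt hDc0
  have htg0 : 0 ≤ tg := Real.sqrt_nonneg _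
  have htc0 : 0 ≤ tc := Real.sqrt_nonneg _
  set lg : ℝ := ((a:ℝ) - b - 1 + tg)/2 with hlgdef
  set lc : ℝ := ((b:ℝ) - a - 1 + tc)/2 with hlcdef
  have hquadg : lg^2 + ((b:ℝ) - a + 1)*lg + b - 2*a*b = 0 := by
    rw [hlgdef]; linear_combination htg2/4
  have hquadc : lc^2 + ((a:ℝ) - b + 1)*lc + a - 2*a*b = 0 := by
    rw [hlcdef]; linear_combination htc2/4
  have hlgle : lg ≤ (a:ℝ) + b - 1 := by
    have hx : tg^2 + 4*(b:ℝ)*(2*b - 1) = ((a:ℝ) + 3*b - 1)^2 := by rw [htg2]; ring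
    have h2 : tg ≤ (a:ℝ) + 3*b - 1 := by
      refine le_of_sq_le_sq' htg0 (by linarith) ?_
      nlinarith [mul_nonneg (by linarith : (0:ℝ) ≤ (b:ℝ)) (by linarith : (0:ℝ) ≤ 2*(b:ℝ) - 1)]
    rw [hlgdef]; linarith
  have hlcle : lc ≤ (a:ℝ) + b - 1 := by
    have hx : tc^2 + 4*(a:ℝ)*(2*a - 1) = (3*(a:ℝ) + b - 1)^2 := by rw [htc2]; ring
    have h2 : tc ≤ 3*(a:ℝ) + b - 1 := by
      refine le_of_sq_le_sq' htc0 (by linarith) ?_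
      nlinarith [mul_nonneg (by linarith : (0:ℝ) ≤ (a:ℝ)) (by linarith : (0:ℝ) ≤ 2*(a:ℝ) - 1)]
    rw [hlcdef]; linarith
  -- vectors
  set nuv : Fin n → ℝ := fun v => nuF (clsN a b (v:ℕ)) with hnuv
  set wg : Fin n → ℝ := fun v => omG a b lg (clsN a b (v:ℕ)) with hwg
  set wc : Fin n → ℝ := fun v => omC a b lc (clsN a b (v:ℕ)) with hwc
  have hcls0 : clsN a b 0 = 0 := by unfold clsN; rw [if_pos (by omega : 0 < a)]
  have hnu0 : nuv ≠ 0 := by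
    intro h
    have h0 := congrFun h ⟨0, by omega⟩
    rw [hnuv] at h0
    simp only [hcls0] at h0
    norm_num [nuF] at h0
  have hwg0 : wg ≠ 0 := by
    intro h
    have h0 := congrFun h ⟨0, by omega⟩
    rw [hwg] at h0
    simp only [hcls0] at h0
    norm_num [omG] at h0
    linarith
  have hwc0 : wc ≠ 0 := by
    intro h
    have h0 := congrFun h ⟨0, by omega⟩
    rw [hwc] at h0
    simp only [hcls0] at h0
    norm_num [omC] at h0
    linarith
  -- dot products
  have hdotg : nuv ⬝ᵥ wg = 0 := by
    have h2 : nuv ⬝ᵥ wg = ∑ v : Fin n, (fun k => nuF k * omG a b lg k) (clsN a b (v:ℕ)) := rfl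
    rw [h2, sum_cls hn (fun k => nuF k * omG a b lg k)]
    norm_num [nuF, omG]
    try ring
  have hdotc : nuv ⬝ᵥ wc = 0 := by
    have h2 : nuv ⬝ᵥ wc = ∑ v : Fin n, (fun k => nuF k * omC a b lc k) (clsN a b (v:ℕ)) := rfl
    rw [h2, sum_cls hn (fun k => nuF k * omC a b lc k)]
    norm_num [nuF, omC]
    try ring
  have hnn : nuv ⬝ᵥ nuv = 2*(a:ℝ) + 2*b := by
    have h2 : nuv ⬝ᵥ nuv = ∑ v : Fin n, (fun k => nuF k * nuF k) (clsN a b (v:ℕ)) := rfl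
    rw [h2, sum_cls hn (fun k => nuF k * nuF k)]
    norm_num [nuF]
    ring
  -- eigen equations
  have heigg : (letI := Classical.decRel (myG a b n).Adj; (myG a b n).adjMatrix ℝ) *ᵥ wg
      = lg • wg := by
    funext u
    rw [show ((letI := Classical.decRel (myG a b n).Adj; (myG a b n).adjMatrix ℝ) *ᵥ wg) u
        = rowVal relB (omG a b lg) a b e (clsN a b (u:ℕ)) from mulVec_apply_myG hn _ u]
    have hsm : (lg • wg) u = lg * omG a b lg (clsN a b (u:ℕ)) := rfl
    rw [hsm]
    rcases clsN_cases a b (u:ℕ) with h | h | h | h | h <;> rw [h]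
    · norm_num [rowVal, relB, omG]; ring
    · norm_num [rowVal, relB, omG]; linear_combination -hquadg
    · norm_num [rowVal, relB, omG]; linear_combination hquadg
    · norm_num [rowVal, relB, omG]; ring
    · norm_num [rowVal, relB, omG]
  have heigc : (letI := Classical.decRel (myG a b n)ᶜ.Adj; (myG a b n)ᶜ.adjMatrix ℝ) *ᵥ wc
      = lc • wc := by
    funext u
    rw [show ((letI := Classical.decRel (myG a b n)ᶜ.Adj; (myG a b n)ᶜ.adjMatrix ℝ) *ᵥ wc) u
        = rowVal (fun i j => !relB i j) (omC a b lc) a b e (clsN a b (u:ℕ))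
        from mulVec_apply_myGc hn _ u]
    have hsm : (lc • wc) u = lc * omC a b lc (clsN a b (u:ℕ)) := rfl
    rw [hsm]
    rcases clsN_cases a b (u:ℕ) with h | h | h | h | h <;> rw [h]
    · norm_num [rowVal, relB, omC]; ring
    · norm_num [rowVal, relB, omC]; linear_combination -hquadc
    · norm_num [rowVal, relB, omC]; linear_combination hquadc
    · norm_num [rowVal, relB, omC]; ring
    · norm_num [rowVal, relB, omC]; ring
  -- Rayleigh bounds
  have hrayg : lg * (nuv ⬝ᵥ nuv) ≤
      nuv ⬝ᵥ ((letI := Classical.decRel (myG a b n).Adj; (myG a b n).adjMatrix ℝ) *ᵥ nuv) := by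
    have h2 : nuv ⬝ᵥ ((letI := Classical.decRel (myG a b n).Adj; (myG a b n).adjMatrix ℝ) *ᵥ nuv)
        = ∑ u : Fin n, nuF (clsN a b (u:ℕ)) *
            ((letI := Classical.decRel (myG a b n).Adj; (myG a b n).adjMatrix ℝ) *ᵥ nuv) u := rfl
    rw [h2, Finset.sum_congr rfl (fun u _ => by rw [mulVec_apply_myG hn nuF u])]
    have h3 : ∑ u : Fin n, nuF (clsN a b (u:ℕ)) * rowVal relB nuF a b e (clsN a b (u:ℕ))
        = ∑ u : Fin n, (fun k => nuF k * rowVal relB nuF a b e k) (clsN a b (u:ℕ)) := rfl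
    rw [h3, sum_cls hn (fun k => nuF k * rowVal relB nuF a b e k), hnn]
    have hv0 : nuF 0 * rowVal relB nuF a b e 0 = (a:ℝ) + b - 1 := by
      norm_num [nuF, rowVal, relB]
    have hv1 : nuF 1 * rowVal relB nuF a b e 1 = (a:ℝ) + b := by
      norm_num [nuF, rowVal, relB]
    have hv2 : nuF 2 * rowVal relB nuF a b e 2 = (a:ℝ) + b := by
      norm_num [nuF, rowVal, relB]
      try ring
    have hv3 : nuF 3 * rowVal relB nuF a b e 3 = (a:ℝ) + b - 1 := by
      norm_num [nuF, rowVal, relB]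
      try ring
    have hv4 : nuF 4 * rowVal relB nuF a b e 4 = 0 := by
      norm_num [nuF, rowVal, relB]
    rw [hv0, hv1, hv2, hv3, hv4]
    nlinarith [mul_le_mul_of_nonneg_right hlgle (by positivity : (0:ℝ) ≤ 2*(a:ℝ) + 2*b), hB1]
  have hrayc : lc * (nuv ⬝ᵥ nuv) ≤
      nuv ⬝ᵥ ((letI := Classical.decRel (myG a b n)ᶜ.Adj; (myG a b n)ᶜ.adjMatrix ℝ) *ᵥ nuv) := by
    have h2 : nuv ⬝ᵥ ((letI := Classical.decRel (myG a b n)ᶜ.Adj; (myG a b n)ᶜ.adjMatrix ℝ) *ᵥ nuv)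
        = ∑ u : Fin n, nuF (clsN a b (u:ℕ)) *
            ((letI := Classical.decRel (myG a b n)ᶜ.Adj; (myG a b n)ᶜ.adjMatrix ℝ) *ᵥ nuv) u := rfl
    rw [h2, Finset.sum_congr rfl (fun u _ => by rw [mulVec_apply_myGc hn nuF u])]
    have h3 : ∑ u : Fin n, nuF (clsN a b (u:ℕ)) *
          rowVal (fun i j => !relB i j) nuF a b e (clsN a b (u:ℕ))
        = ∑ u : Fin n, (fun k => nuF k * rowVal (fun i j => !relB i j) nuF a b e k)
            (clsN a b (u:ℕ)) := rfl
    rw [h3, sum_cls hn (fun k => nuF k * rowVal (fun i j => !relB i j) nuF a b e k), hnn]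
    have hv0 : nuF 0 * rowVal (fun i j => !relB i j) nuF a b e 0 = (a:ℝ) + b := by
      norm_num [nuF, rowVal, relB]
      try ring
    have hv1 : nuF 1 * rowVal (fun i j => !relB i j) nuF a b e 1
        = (a:ℝ) + b - 1 := by
      norm_num [nuF, rowVal, relB]
      try ring
    have hv2 : nuF 2 * rowVal (fun i j => !relB i j) nuF a b e 2
        = (a:ℝ) + b - 1 := by
      norm_num [nuF, rowVal, relB]
      try ring
    have hv3 : nuF 3 * rowVal (fun i j => !relB i j) nuF a b e 3 = (a:ℝ) + b := by
      norm_num [nuF, rowVal, relB]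
    have hv4 : nuF 4 * rowVal (fun i j => !relB i j) nuF a b e 4 = 0 := by
      norm_num [nuF, rowVal, relB]
    rw [hv0, hv1, hv2, hv3, hv4]
    nlinarith [mul_le_mul_of_nonneg_right hlcle (by positivity : (0:ℝ) ≤ 2*(a:ℝ) + 2*b), hA1]
  -- eigenvalue lower bounds
  have h1 := graphEig_ge hn2 (myG a b n) lg nuv wg hnu0 hwg0 hdotg heigg hrayg
  have h2 := graphEig_ge hn2 (myG a b n)ᶜ lc nuv wc hnu0 hwc0 hdotc heigc hrayc
  -- final arithmetic
  have hncast : (n:ℝ) = 2*(a:ℝ) + 2*b + e := by rw [hn]; push_cast; ring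
  have hs2 : (Real.sqrt 2)^2 = 2 := Real.sq_sqrt (by norm_num)
  have hs0 : 0 ≤ Real.sqrt 2 := Real.sqrt_nonneg _
  have htceq : tc = tg := by rw [htcdef, htgdef]; congr 1; ring
  have hsum : lg + lc = ((a:ℝ) - b - 1 + tg)/2 + ((b:ℝ) - a - 1 + tc)/2 := by
    rw [hlgdef, hlcdef]
  have hcases : (a:ℝ) = (b:ℝ) ∨ (a:ℝ) = (b:ℝ) + 1 := by
    rcases (by omega : a = b ∨ a = b + 1) with hc | hc
    · left; exact_mod_cast congrArg (Nat.cast (R := ℝ)) hc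
    · right; rw [hc]; push_cast; ring
  have hfin : Real.sqrt 2 / 2 * (2*(a:ℝ) + 2*b + e) - 3 < lg + lc := by
    rw [hsum, htceq]
    exact final_arith _ _ _ _ _ hB1 hE0 hE1 hcases htg2 htg0 hs2 hs0
  calc Real.sqrt 2 / 2 * n - 3 = Real.sqrt 2 / 2 * (2*(a:ℝ) + 2*b + e) - 3 := by rw [hncast]
    _ < lg + lc := hfin
    _ ≤ _ := add_le_add h1 h2

theorem stmt10 (n : ℕ) (hn : 4 ≤ n) :
    ∃ G : SimpleGraph (Fin n),
      Real.sqrt 2 / 2 * n - 3 < graphEig G ⟨1, by omega⟩ + graphEig Gᶜ ⟨1, by omega⟩ := by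
  obtain ⟨a, b, e, h1, h2, h3, h4, h5⟩ :
      ∃ a b e : ℕ, 1 ≤ b ∧ b ≤ a ∧ a ≤ b + 1 ∧ e ≤ 1 ∧ n = 2*a + 2*b + e := by
    refine ⟨n/4 + n%4/2, n/4, n - (2*(n/4 + n%4/2) + 2*(n/4)), ?_, ?_, ?_, ?_, ?_⟩ <;> omega
  exact ⟨myG a b n, main_bound h1 h2 h3 h4 h5⟩
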